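/- Let c, θ ∈ ℝ, σ > 0, α, β > 0, let Z be a standard Gaussian random variable, and let V be a Gamma(α, β) distributed random variable independent of Z. Then the characteristic function of the Variance Gamma variable X = c + θV + σ√V · Z is ψ_X(t) = exp(ict)(1 − iθt/β + t²σ²/(2β))^{-α} for all real t, where the complex power is the principal branch. -/

import Mathlib

/-!
Conditionally on `V = v`, the variable is Gaussian with mean `c + θv` and variance `σ²v`, so its
characteristic function at `t` is `exp (it(c + θv) - t²σ²v/2)`. Integrating over `v` leaves the
complex moment generating function of the Gamma law at `s = iθt - t²σ²/2`, where `Re s ≤ 0 < β`.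
For real `s < β` the Gamma integral gives `(1 - s/β)^(-α)`, and both sides are analytic on the
half-plane `Re s < β`, hence agree there.
-/

open MeasureTheory ProbabilityTheory Complex Set Filter Topology

namespace ProbabilityTheory

lemma integral_gammaMeasure_eq_setIntegral {E : Type*} [NormedAddCommGroup E] [NormedSpace ℝ E]
    {a r : ℝ} (ha : 0 < a) (hr : 0 < r) (f : ℝ → E) :
    ∫ x, f x ∂gammaMeasure a r
      = ∫ x in Ioi 0, (r ^ a / Real.Gamma a * x ^ (a - 1) * Real.exp (-(r * x))) • f x := by
  rw [gammaMeasure, integral_withDensity_eq_integral_toReal_smul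
    (f := gammaPDF a r) (measurable_gammaPDFReal a r).ennreal_ofReal
    (ae_of_all _ fun _ ↦ ENNReal.ofReal_lt_top),
    ← integral_Ici_eq_integral_Ioi,
    ← setIntegral_eq_integral_of_forall_compl_eq_zero (s := Ici 0) fun x hx ↦ ?_]
  · refine setIntegral_congr_fun measurableSet_Ici fun x (hx : 0 ≤ x) ↦ ?_
    rw [gammaPDF, ENNReal.toReal_ofReal (gammaPDFReal_nonneg ha hr x), gammaPDFReal, if_pos hx]
  · rw [gammaPDF_of_neg (not_le.mp hx), ENNReal.toReal_zero, zero_smul]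

lemma ae_nonneg_gammaMeasure (a r : ℝ) : ∀ᵐ x ∂gammaMeasure a r, 0 ≤ x :=
  (ae_withDensity_iff (f := gammaPDF a r) (measurable_gammaPDFReal a r).ennreal_ofReal).mpr <|
    ae_of_all _ fun _ hx ↦ not_lt.mp fun hneg ↦ hx (gammaPDF_of_neg hneg)

lemma mgf_id_gammaMeasure {a r t : ℝ} (ha : 0 < a) (hr : 0 < r) (ht : t < r) :
    mgf id (gammaMeasure a r) t = (1 - t / r) ^ (-a) := by
  have hrt : 0 < r - t := sub_pos.mpr ht
  calc mgf id (gammaMeasure a r) t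
      = r ^ a / Real.Gamma a * ∫ x in Ioi 0, x ^ (a - 1) * Real.exp (-((r - t) * x)) := by
        rw [mgf, integral_gammaMeasure_eq_setIntegral ha hr, ← integral_const_mul]
        refine setIntegral_congr_fun measurableSet_Ioi fun x _ ↦ ?_
        rw [smul_eq_mul, id, mul_assoc, mul_assoc, ← Real.exp_add]
        ring_nf
    _ = (1 - t / r) ^ (-a) := by
        rw [Real.integral_rpow_mul_exp_neg_mul_Ioi ha hrt,
          show 1 - t / r = (r - t) / r by field_simp, Real.rpow_neg (by positivity),
          Real.div_rpow hrt.le hr.le, Real.div_rpow zero_le_one hrt.le, Real.one_rpow]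
        have := (Real.Gamma_pos_of_pos ha).ne'
        field_simp

lemma Iio_subset_integrableExpSet_id_gammaMeasure {a r : ℝ} (ha : 0 < a) (hr : 0 < r) :
    Iio r ⊆ integrableExpSet id (gammaMeasure a r) := fun t (ht : t < r) ↦ by
  have := isProbabilityMeasure_gammaMeasure ha hr
  rw [integrableExpSet, mem_ofPred_eq, ← mgf_pos_iff, mgf_id_gammaMeasure ha hr ht]
  exact Real.rpow_pos_of_pos (by rw [sub_pos, div_lt_one hr]; exact ht) _

lemma complexMGF_id_gammaMeasure {a r : ℝ} (ha : 0 < a) (hr : 0 < r) {z : ℂ} (hz : z.re < r) :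
    complexMGF id (gammaMeasure a r) z = (1 - z / r) ^ (-(a : ℂ)) := by
  set U : Set ℂ := {z | z.re < r}
  have hslit : ∀ z ∈ U, 1 - z / r ∈ slitPlane := fun z (hz : z.re < r) ↦ by
    refine mem_slitPlane_iff.mpr (Or.inl ?_)
    have : (z / r).re = z.re / r := by simp [div_ofReal_re]
    simpa [this, sub_pos, div_lt_one hr] using hz
  have hmgf : AnalyticOnNhd ℂ (complexMGF id (gammaMeasure a r)) U :=
    analyticOnNhd_complexMGF.mono fun z (hz : z.re < r) ↦
      interior_maximal (Iio_subset_integrableExpSet_id_gammaMeasure ha hr) isOpen_Iio hz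
  have hpow : AnalyticOnNhd ℂ (fun z : ℂ ↦ (1 - z / r) ^ (-(a : ℂ))) U :=
    fun z hz ↦ (by fun_prop : AnalyticAt ℂ (fun z : ℂ ↦ 1 - z / r) z).cpow analyticAt_const
      (hslit z hz)
  have hreal : ∀ᶠ t : ℝ in 𝓝[≠] 0,
      complexMGF id (gammaMeasure a r) t = (1 - (t : ℂ) / r) ^ (-(a : ℂ)) := by
    filter_upwards [nhdsWithin_le_nhds (Iio_mem_nhds hr)] with t (ht : t < r)
    have hpos : 0 ≤ 1 - t / r := by rw [sub_nonneg, div_le_one hr]; exact ht.le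
    rw [complexMGF_ofReal, mgf_id_gammaMeasure ha hr ht, ofReal_cpow hpos]
    push_cast
    rfl
  have hofReal : Tendsto ((↑) : ℝ → ℂ) (𝓝[≠] 0) (𝓝[≠] 0) :=
    continuous_ofReal.continuousWithinAt.tendsto_nhdsWithin fun _ _ ↦ by simp_all
  refine hmgf.eqOn_of_preconnected_of_frequently_eq hpow
    ((convex_halfSpace_re_lt r).isPreconnected) (z₀ := 0) (by simpa [U] using hr)
    (hofReal.frequently hreal.frequently) hz

lemma integral_cexp_normalVarianceMeanMixture {Ω : Type*} [MeasurableSpace Ω] {P : Measure Ω}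
    [IsProbabilityMeasure P] {μ : Measure ℝ} [IsProbabilityMeasure μ] (hμ : ∀ᵐ v ∂μ, 0 ≤ v)
    {V Z : Ω → ℝ} (hV : P.map V = μ) (hZ : P.map Z = gaussianReal 0 1) (hVZ : IndepFun V Z P)
    (c θ σ t : ℝ) :
    ∫ ω, cexp (I * t * (c + θ * V ω + σ * √(V ω) * Z ω)) ∂P
      = cexp (I * c * t) * complexMGF id μ (I * t * θ - t ^ 2 * σ ^ 2 / 2) := by
  set g : ℝ × ℝ → ℂ := fun p ↦ cexp (I * t * (c + θ * p.1 + σ * √p.1 * p.2))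
  have hg : Continuous g := by fun_prop
  have hg_norm : ∀ p, ‖g p‖ = 1 := fun p ↦ by
    simp [g, Complex.norm_exp, Complex.mul_re]
  have hVm : AEMeasurable V P := aemeasurable_of_map_neZero (by rw [hV]; infer_instance)
  have hZm : AEMeasurable Z P := aemeasurable_of_map_neZero (by rw [hZ]; infer_instance)
  have hlaw : P.map (fun ω ↦ (V ω, Z ω)) = μ.prod (gaussianReal 0 1) := by
    rw [← hV, ← hZ]
    exact (indepFun_iff_map_prod_eq_prod_map_map hVm hZm).mp hVZ
  have hinner : ∀ v, 0 ≤ v → ∫ z, g (v, z) ∂gaussianReal 0 1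
      = cexp (I * c * t) * cexp ((I * t * θ - t ^ 2 * σ ^ 2 / 2) * v) := fun v hv ↦ by
    have hsqrt : ((√v : ℝ) : ℂ) ^ 2 = v := by rw [← ofReal_pow, Real.sq_sqrt hv]
    calc ∫ z, g (v, z) ∂gaussianReal 0 1
        = cexp (I * t * (c + θ * v)) * complexMGF id (gaussianReal 0 1) (I * t * σ * √v) := by
          rw [complexMGF, ← integral_const_mul]
          congr 1 with z
          rw [← Complex.exp_add]
          simp only [g, id]
          ring_nf
      _ = cexp (I * c * t) * cexp ((I * t * θ - t ^ 2 * σ ^ 2 / 2) * v) := by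
          rw [complexMGF_id_gaussianReal, ← Complex.exp_add, ← Complex.exp_add]
          congr 1
          push_cast
          linear_combination (-(t : ℂ) ^ 2 * σ ^ 2 / 2) * hsqrt + (t * σ * √v) ^ 2 / 2 * I_sq
  calc ∫ ω, cexp (I * t * (c + θ * V ω + σ * √(V ω) * Z ω)) ∂P
      = ∫ p, g p ∂(μ.prod (gaussianReal 0 1)) := by
        rw [← hlaw, integral_map (hVm.prodMk hZm) hg.aestronglyMeasurable]
    _ = ∫ v, ∫ z, g (v, z) ∂gaussianReal 0 1 ∂μ :=
        integral_prod g (Integrable.of_bound hg.aestronglyMeasurable 1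
          (ae_of_all _ fun p ↦ (hg_norm p).le))
    _ = cexp (I * c * t) * complexMGF id μ (I * t * θ - t ^ 2 * σ ^ 2 / 2) := by
        rw [complexMGF, ← integral_const_mul]
        exact integral_congr_ae (hμ.mono hinner)

end ProbabilityTheory

theorem charFun_varianceGamma_shifted_general
    {Ω : Type*} [MeasurableSpace Ω] (P : Measure Ω) [IsProbabilityMeasure P]
    (α β c θ σ : ℝ) (hα : 0 < α) (hβ : 0 < β)
    (V Z : Ω → ℝ)
    (hV : Measure.map V P = gammaMeasure α β)
    (hZ : Measure.map Z P = gaussianReal 0 1)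
    (hindep : IndepFun V Z P) (t : ℝ) :
    ∫ ω, Complex.exp (Complex.I * t * (c + θ * V ω + σ * Real.sqrt (V ω) * Z ω)) ∂P
      = Complex.exp (Complex.I * c * t)
        * ((1 : ℂ) - Complex.I * θ * t / β + t ^ 2 * σ ^ 2 / (2 * β)) ^ (-(α : ℂ)) := by
  have := isProbabilityMeasure_gammaMeasure hα hβ
  have hre : (I * t * θ - t ^ 2 * σ ^ 2 / 2 : ℂ).re < β := by
    have : (I * t * θ - t ^ 2 * σ ^ 2 / 2 : ℂ).re = -(t * σ) ^ 2 / 2 := by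
      simp [← ofReal_pow]; ring
    rw [this]
    linarith [sq_nonneg (t * σ)]
  rw [integral_cexp_normalVarianceMeanMixture (ae_nonneg_gammaMeasure α β) hV hZ hindep,
    complexMGF_id_gammaMeasure hα hβ hre]
  congr 2
  have : (β : ℂ) ≠ 0 := ofReal_ne_zero.mpr hβ.ne'
  field_simp
  ring

/-- The characteristic function of the Variance Gamma variable
`X = c + θV + σ√V ⬝ Z`, where `Z` is standard Gaussian and `V` is an independent
`Gamma(α, β)` variable, is `t ↦ exp(ict)(1 - iθt/β + t²σ²/(2β))^(-α)` (principal branch). -/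
theorem charFun_varianceGamma_shifted
    {Ω : Type*} [MeasurableSpace Ω] (P : Measure Ω) [IsProbabilityMeasure P]
    (α β c θ σ : ℝ) (hα : 0 < α) (hβ : 0 < β) (hσ : 0 < σ)
    (V Z : Ω → ℝ) (hVm : Measurable V) (hZm : Measurable Z)
    (hV : Measure.map V P = gammaMeasure α β)
    (hZ : Measure.map Z P = gaussianReal 0 1)
    (hindep : IndepFun V Z P) (t : ℝ) :
    ∫ ω, Complex.exp (Complex.I * t * (c + θ * V ω + σ * Real.sqrt (V ω) * Z ω)) ∂P
      = Complex.exp (Complex.I * c * t)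
        * ((1 : ℂ) - Complex.I * θ * t / β + t ^ 2 * σ ^ 2 / (2 * β)) ^ (-(α : ℂ)) :=
  charFun_varianceGamma_shifted_general P α β c θ σ hα hβ V Z hV hZ hindep t
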